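/- (Proposition 3 of the paper, channel-independent form.) Under the secrecy-code setup, I(V_A; Z | V_B) ≥ max( Σ_{i∈A} C_i + Σ_{j∈R} C_j − r , 0 ), where C_i := I(V_i; (Z, V_{{1,…,i−1}})) and r = |R|. -/

import Mathlib

open scoped Classical

noncomputable section

/-- `p` is a probability mass function on the finite sample space `Ω`. -/
def IsPMF {Ω : Type} [Fintype Ω] (p : Ω → ℝ) : Prop :=
  (∀ ω, 0 ≤ p ω) ∧ ∑ ω, p ω = 1

/-- `P(X = x)`: the probability of the event `{X = x}` under the pmf `p`. -/
def prob {Ω : Type} [Fintype Ω] (p : Ω → ℝ) {α : Type} (X : Ω → α) (x : α) : ℝ :=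
  ∑ ω, if X ω = x then p ω else 0

/-- Shannon entropy of `X` in bits (logarithm base 2). -/
def entropy {Ω : Type} [Fintype Ω] (p : Ω → ℝ) {α : Type} [Fintype α] (X : Ω → α) : ℝ :=
  -∑ x, prob p X x * Real.logb 2 (prob p X x)

/-- Mutual information `I(X;Y) = H(X) + H(Y) - H((X,Y))` in bits. -/
def mutInfo {Ω : Type} [Fintype Ω] (p : Ω → ℝ) {α β : Type} [Fintype α] [Fintype β]
    (X : Ω → α) (Y : Ω → β) : ℝ :=
  entropy p X + entropy p Y - entropy p fun ω => (X ω, Y ω)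

/-- Conditional mutual information
`I(X;Y∣W) = H((X,W)) + H((Y,W)) - H((X,Y,W)) - H(W)` in bits. -/
def condMutInfo {Ω : Type} [Fintype Ω] (p : Ω → ℝ) {α β γ : Type}
    [Fintype α] [Fintype β] [Fintype γ] (X : Ω → α) (Y : Ω → β) (W : Ω → γ) : ℝ :=
  entropy p (fun ω => (X ω, W ω)) + entropy p (fun ω => (Y ω, W ω))
    - entropy p (fun ω => (X ω, Y ω, W ω)) - entropy p W

/-! Since `I(V_A; Z | V_B) = H(V_A | V_B) - H(V_A | Z, V_B)` and the bits are uniform,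
`H(V_A | V_B) = |A|`. Enlarging `V_A` to `V_{A ∪ R}` can only increase `H(· | Z, V_B)`, and
by the chain rule in increasing index order `H(V_{A ∪ R} | Z, V_B)` is the sum over
`i ∈ A ∪ R` of `H(V_i | V_{(A ∪ R) ∩ [0, i)}, Z, V_B)`. The condition there contains
`(Z, V_{<i})` because `A ∪ R ∪ B` covers everything, so each term is at most
`H(V_i | Z, V_{<i}) = 1 - C_i`. Nonnegativity of conditional mutual information is
Gibbs' inequality. -/

open Finset Real

section Entropy

variable {Ω : Type} [Fintype Ω] (p : Ω → ℝ)

lemma prob_nonneg (hp : IsPMF p) {α : Type} (X : Ω → α) (x : α) : 0 ≤ prob p X x :=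
  sum_nonneg fun ω _ => ite_nonneg (hp.1 ω) le_rfl

lemma sum_prob_mul {α : Type} [Fintype α] (X : Ω → α) (F : α → ℝ) :
    ∑ x, prob p X x * F x = ∑ ω, p ω * F (X ω) := by
  simp only [prob, sum_mul, ite_mul, zero_mul]
  rw [sum_comm]
  simp

lemma sum_prob (hp : IsPMF p) {α : Type} [Fintype α] (X : Ω → α) : ∑ x, prob p X x = 1 := by
  simpa [hp.2] using sum_prob_mul p X fun _ => 1

lemma sum_prob_pair_fst {α γ : Type} [Fintype α] (X : Ω → α) (W : Ω → γ) (w : γ) :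
    ∑ x, prob p (fun ω => (X ω, W ω)) (x, w) = prob p W w := by
  simp only [prob, Prod.mk.injEq]
  rw [sum_comm]
  refine sum_congr rfl fun ω _ => ?_
  simp [ite_and]

lemma prob_le_prob_comp (hp : IsPMF p) {α β : Type} (X : Ω → α) (f : α → β) (x : α) :
    prob p X x ≤ prob p (fun ω => f (X ω)) (f x) :=
  sum_le_sum fun ω _ => by
    split_ifs with h h' h'
    · exact le_rfl
    · exact absurd (congrArg f h) h'
    · exact hp.1 ω
    · exact le_rfl

lemma prob_comp_of_injective {α β : Type} (X : Ω → α) {f : α → β}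
    (hf : Function.Injective f) (x : α) :
    prob p (fun ω => f (X ω)) (f x) = prob p X x := by
  simp only [prob, hf.eq_iff]

lemma prob_comp {α β : Type} [Fintype α] (X : Ω → α) (f : α → β) (y : β) :
    prob p (fun ω => f (X ω)) y = ∑ x with f x = y, prob p X x := by
  have h := sum_prob_mul p X fun x => if f x = y then 1 else 0
  simp only [mul_ite, mul_one, mul_zero] at h
  rw [sum_filter]
  exact h.symm

lemma entropy_comp_eq_sum {α β : Type} [Fintype α] [Fintype β] (X : Ω → α) (f : α → β) :
    entropy p (fun ω => f (X ω))
      = -∑ x, prob p X x * logb 2 (prob p (fun ω => f (X ω)) (f x)) := by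
  rw [entropy, sum_prob_mul, sum_prob_mul]

lemma entropy_comp_le (hp : IsPMF p) {α β : Type} [Fintype α] [Fintype β] (X : Ω → α)
    (f : α → β) : entropy p (fun ω => f (X ω)) ≤ entropy p X := by
  rw [entropy_comp_eq_sum, entropy, neg_le_neg_iff]
  refine sum_le_sum fun x _ => ?_
  rcases (prob_nonneg p hp X x).eq_or_lt with h | h
  · simp [← h]
  · exact mul_le_mul_of_nonneg_left
      (logb_le_logb_of_le one_lt_two h (prob_le_prob_comp p hp X f x)) h.le

lemma entropy_comp_of_injective {α β : Type} [Fintype α] [Fintype β] (X : Ω → α)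
    {f : α → β} (hf : Function.Injective f) : entropy p (fun ω => f (X ω)) = entropy p X := by
  rw [entropy_comp_eq_sum]
  simp only [prob_comp_of_injective p X hf]
  rfl

lemma entropy_eq_logb_card_of_uniform {α : Type} [Fintype α] (X : Ω → α)
    (hX : ∀ x, prob p X x = (Fintype.card α : ℝ)⁻¹) :
    entropy p X = logb 2 (Fintype.card α) := by
  simp only [entropy, hX, sum_const, card_univ, nsmul_eq_mul, logb_inv]
  rcases eq_or_ne (Fintype.card α : ℝ) 0 with h | h
  · simp [h]
  · field_simp

end Entropy

theorem sum_mul_logb_le_sum_mul_logb {T : Type} [Fintype T] {q r : T → ℝ}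
    (hq : ∀ t, 0 ≤ q t) (hr : ∀ t, 0 ≤ r t) (hqr : ∀ t, q t ≠ 0 → 0 < r t)
    (hsum : ∑ t, r t ≤ ∑ t, q t) :
    ∑ t, q t * logb 2 (r t) ≤ ∑ t, q t * logb 2 (q t) := by
  have hlog2 : 0 < log 2 := log_pos one_lt_two
  have key : ∀ t, q t * (logb 2 (r t) - logb 2 (q t)) ≤ (r t - q t) / log 2 := by
    intro t
    rcases (hq t).eq_or_lt with h | h
    · simp [← h, div_nonneg (hr t) hlog2.le]
    · have hrt := hqr t h.ne'
      rw [← logb_div hrt.ne' h.ne', logb]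
      calc q t * (log (r t / q t) / log 2) = q t * log (r t / q t) / log 2 := by ring
        _ ≤ q t * (r t / q t - 1) / log 2 := by
          gcongr; exact log_le_sub_one_of_pos (div_pos hrt h)
        _ = (r t - q t) / log 2 := by field_simp
  have hsub : ∑ t, q t * (logb 2 (r t) - logb 2 (q t)) ≤ 0 :=
    calc _ ≤ ∑ t, (r t - q t) / log 2 := sum_le_sum fun t _ => key t
      _ = (∑ t, r t - ∑ t, q t) / log 2 := by rw [← sum_div, sum_sub_distrib]
      _ ≤ 0 := div_nonpos_of_nonpos_of_nonneg (sub_nonpos.2 hsum) hlog2.le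
  simpa only [mul_sub, sum_sub_distrib, sub_nonpos] using hsub

section CondEntropy

variable {Ω : Type} [Fintype Ω] (p : Ω → ℝ)

def condEntropy {α γ : Type} [Fintype α] [Fintype γ] (X : Ω → α) (W : Ω → γ) : ℝ :=
  entropy p (fun ω => (X ω, W ω)) - entropy p W

lemma mutInfo_eq_entropy_sub_condEntropy {α β : Type} [Fintype α] [Fintype β]
    (X : Ω → α) (Y : Ω → β) : mutInfo p X Y = entropy p X - condEntropy p X Y := by
  unfold mutInfo condEntropy
  ring

lemma condMutInfo_eq_condEntropy_sub {α β γ : Type} [Fintype α] [Fintype β] [Fintype γ]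
    (X : Ω → α) (Y : Ω → β) (W : Ω → γ) :
    condMutInfo p X Y W = condEntropy p X W - condEntropy p X (fun ω => (Y ω, W ω)) := by
  unfold condMutInfo condEntropy
  ring

-- Where `P(W = w) = 0` the summand is `0 / 0 = 0`, so `mul_self_div_self` needs no case split.
lemma sum_prob_pair_mul_prob_pair_div_prob (hp : IsPMF p) {α β γ : Type} [Fintype α]
    [Fintype β] [Fintype γ] (X : Ω → α) (Y : Ω → β) (W : Ω → γ) :
    ∑ t : α × β × γ, prob p (fun ω => (X ω, W ω)) (t.1, t.2.2)
      * prob p (fun ω => (Y ω, W ω)) t.2 / prob p W t.2.2 = 1 :=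
  calc _ = ∑ w, ∑ x, ∑ y, prob p (fun ω => (X ω, W ω)) (x, w)
          * prob p (fun ω => (Y ω, W ω)) (y, w) / prob p W w := by
        simp only [Fintype.sum_prod_type]
        conv_rhs => rw [sum_comm]
        exact sum_congr rfl fun x _ => by rw [sum_comm]
    _ = ∑ w, prob p W w := by
        refine sum_congr rfl fun w _ => ?_
        simp only [← sum_div, ← sum_mul_sum, sum_prob_pair_fst, mul_self_div_self]
    _ = 1 := sum_prob p hp W

theorem condMutInfo_nonneg (hp : IsPMF p) {α β γ : Type} [Fintype α] [Fintype β] [Fintype γ]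
    (X : Ω → α) (Y : Ω → β) (W : Ω → γ) : 0 ≤ condMutInfo p X Y W := by
  set T : Ω → α × β × γ := fun ω => (X ω, Y ω, W ω)
  set q := prob p T
  set a : α × β × γ → ℝ := fun t => prob p (fun ω => (X ω, W ω)) (t.1, t.2.2)
  set b : α × β × γ → ℝ := fun t => prob p (fun ω => (Y ω, W ω)) t.2
  set c : α × β × γ → ℝ := fun t => prob p W t.2.2
  have hqa : ∀ t, q t ≤ a t := fun t => prob_le_prob_comp p hp T (fun t => (t.1, t.2.2)) t
  have hqb : ∀ t, q t ≤ b t := fun t => prob_le_prob_comp p hp T (fun t => t.2) t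
  have hac : ∀ t, a t ≤ c t := fun t =>
    prob_le_prob_comp p hp (fun ω => (X ω, W ω)) Prod.snd (t.1, t.2.2)
  have hpos : ∀ t, q t ≠ 0 → 0 < a t ∧ 0 < b t ∧ 0 < c t := fun t ht =>
    have hq := lt_of_le_of_ne (prob_nonneg p hp T t) (Ne.symm ht)
    ⟨hq.trans_le (hqa t), hq.trans_le (hqb t), (hq.trans_le (hqa t)).trans_le (hac t)⟩
  have hcmi : condMutInfo p X Y W
      = ∑ t, q t * logb 2 (q t) - ∑ t, q t * logb 2 (a t * b t / c t) := by
    have hlog : ∀ t, q t * logb 2 (a t * b t / c t)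
        = q t * logb 2 (a t) + q t * logb 2 (b t) - q t * logb 2 (c t) := by
      intro t
      by_cases ht : q t = 0
      · simp [ht]
      · obtain ⟨ha, hb, hc⟩ := hpos t ht
        rw [logb_div (mul_pos ha hb).ne' hc.ne', logb_mul ha.ne' hb.ne']
        ring
    simp only [hlog, sum_sub_distrib, sum_add_distrib]
    rw [condMutInfo, entropy_comp_eq_sum p T (fun t => (t.1, t.2.2)),
      entropy_comp_eq_sum p T (fun t => t.2), entropy_comp_eq_sum p T (fun t => t.2.2)]
    simp only [entropy, q]
    ring
  rw [hcmi, sub_nonneg]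
  refine sum_mul_logb_le_sum_mul_logb (prob_nonneg p hp T) (fun t => ?_) (fun t ht => ?_)
    (by rw [sum_prob_pair_mul_prob_pair_div_prob p hp, sum_prob p hp])
  · exact div_nonneg (mul_nonneg (prob_nonneg p hp _ _) (prob_nonneg p hp _ _))
      (prob_nonneg p hp _ _)
  · obtain ⟨ha, hb, hc⟩ := hpos t ht
    positivity

lemma condEntropy_eq_zero_of_subsingleton {α γ : Type} [Fintype α] [Fintype γ] [Subsingleton α]
    (X : Ω → α) (W : Ω → γ) : condEntropy p X W = 0 := by
  have hsnd : Function.Injective (Prod.snd : α × γ → γ) :=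
    fun _ _ h => Prod.ext (Subsingleton.elim _ _) h
  rw [condEntropy, ← entropy_comp_of_injective p (fun ω => (X ω, W ω)) hsnd, sub_self]

lemma condEntropy_comp_right_of_injective {α γ δ : Type} [Fintype α] [Fintype γ] [Fintype δ]
    (X : Ω → α) (W : Ω → γ) {g : γ → δ} (hg : Function.Injective g) :
    condEntropy p X (fun ω => g (W ω)) = condEntropy p X W := by
  rw [condEntropy, condEntropy, entropy_comp_of_injective p W hg]
  exact congrArg (· - entropy p W) (entropy_comp_of_injective p (fun ω => (X ω, W ω))
    (f := Prod.map id g) (Function.injective_id.prodMap hg))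

lemma condEntropy_comp_left_le (hp : IsPMF p) {α β γ : Type} [Fintype α] [Fintype β]
    [Fintype γ] (X : Ω → α) (f : α → β) (W : Ω → γ) :
    condEntropy p (fun ω => f (X ω)) W ≤ condEntropy p X W :=
  sub_le_sub_right (entropy_comp_le p hp (fun ω => (X ω, W ω)) (Prod.map f id)) _

lemma condEntropy_le_condEntropy_comp (hp : IsPMF p) {α γ δ : Type} [Fintype α] [Fintype γ]
    [Fintype δ] (X : Ω → α) (W : Ω → γ) (u : γ → δ) :
    condEntropy p X W ≤ condEntropy p X (fun ω => u (W ω)) := by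
  have h := condMutInfo_nonneg p hp X W (fun ω => u (W ω))
  have hinj : Function.Injective fun w : γ => (w, u w) := fun _ _ h => congrArg Prod.fst h
  rw [condMutInfo_eq_condEntropy_sub, condEntropy_comp_right_of_injective p X W hinj] at h
  linarith

theorem condEntropy_pi_le_sum {ι β γ : Type} [LinearOrder ι] [Fintype β] [Fintype γ]
    {δ : ι → Type} [∀ i, Fintype (δ i)] (hp : IsPMF p) (X : ι → Ω → β) (Y : Ω → γ)
    (U : ∀ i, Ω → δ i) (D : Finset ι)
    (hU : ∀ i ∈ D, ∃ u : (D.filter (· < i) → β) × γ → δ i,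
      ∀ ω, u (fun j => X j ω, Y ω) = U i ω) :
    condEntropy p (fun ω (i : D) => X i ω) Y ≤ ∑ i ∈ D, condEntropy p (X i) (U i) := by
  induction D using Finset.induction_on_max with
  | empty => rw [condEntropy_eq_zero_of_subsingleton, sum_empty]
  | insert a s hlt ih =>
    have ha : a ∉ s := fun h => lt_irrefl a (hlt a h)
    have hUs : ∀ i ∈ s, ∃ u : (s.filter (· < i) → β) × γ → δ i,
        ∀ ω, u (fun j => X j ω, Y ω) = U i ω := by
      intro i hi
      obtain ⟨u, hu⟩ := hU i (mem_insert_of_mem hi)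
      have hsub : (insert a s).filter (· < i) ⊆ s.filter (· < i) := fun j hj => by
        obtain ⟨hj, hji⟩ := mem_filter.1 hj
        exact mem_filter.2 ⟨(mem_insert.1 hj).resolve_left (hji.trans (hlt i hi)).ne, hji⟩
      exact ⟨fun t : (s.filter (· < i) → β) × γ => u (fun j => t.1 ⟨j, hsub j.2⟩, t.2),
        hu⟩
    have hstep : condEntropy p (X a) (fun ω => ((fun j : s => X j ω), Y ω))
        ≤ condEntropy p (X a) (U a) := by
      obtain ⟨u, hu⟩ := hU a (mem_insert_self a s)
      have hsub : (insert a s).filter (· < a) ⊆ s := fun j hj => by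
        obtain ⟨hj, hja⟩ := mem_filter.1 hj
        exact (mem_insert.1 hj).resolve_left hja.ne
      have := condEntropy_le_condEntropy_comp p hp (X a) (fun ω => ((fun j : s => X j ω), Y ω))
        fun t : (s → β) × γ => u (fun j => t.1 ⟨j, hsub j.2⟩, t.2)
      simpa only [hu] using this
    have hsplit : condEntropy p (fun ω (i : ↥(insert a s)) => X i ω) Y
        = condEntropy p (fun ω (i : s) => X i ω) Y
          + condEntropy p (X a) (fun ω => ((fun j : s => X j ω), Y ω)) := by
      have hinj : Function.Injective fun t : (↥(insert a s) → β) × γ =>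
          (t.1 ⟨a, mem_insert_self a s⟩,
            (fun j : s => t.1 ⟨j, mem_insert_of_mem j.2⟩, t.2)) := by
        rintro ⟨t, y⟩ ⟨t', y'⟩ h
        simp only [Prod.mk.injEq, funext_iff] at h
        obtain ⟨ha, ht, rfl⟩ := h
        refine Prod.ext (funext fun ⟨j, hj⟩ => ?_) rfl
        rcases mem_insert.1 hj with rfl | hj
        · exact ha
        · exact ht ⟨j, hj⟩
      have :=
        entropy_comp_of_injective p (fun ω => ((fun i : ↥(insert a s) => X i ω), Y ω)) hinj
      unfold condEntropy
      rw [← this]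
      ring
    rw [sum_insert ha, hsplit]
    linarith [ih hUs]

end CondEntropy

section UniformBits

variable {Ω : Type} [Fintype Ω] (p : Ω → ℝ) {ι : Type} [Fintype ι] [DecidableEq ι]
  {V : ι → Ω → Bool}

lemma card_restrict_fiber (S : Finset ι) (v : S → Bool) :
    Fintype.card {w : ι → Bool // (fun i : S => w i) = v} = 2 ^ (Fintype.card ι - #S) := by
  let e : {w : ι → Bool // (fun i : S => w i) = v}
      ≃ {a // a = v} × ({i // i ∉ S} → Bool) :=
    (Equiv.subtypeEquiv (q := fun y => y.1 = v)
      (Equiv.piEquivPiSubtypeProd (· ∈ S) fun _ => Bool)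
      fun _ => Iff.rfl).trans (Equiv.prodSubtypeFstEquivSubtypeProd (p := (· = v)))
  rw [Fintype.card_congr e, Fintype.card_prod, Fintype.card_unique, one_mul, Fintype.card_fun,
    Fintype.card_bool, Fintype.card_subtype_compl, Fintype.card_coe]

variable (hV : ∀ v : ι → Bool, prob p (fun ω i => V i ω) v = (1 / 2 : ℝ) ^ Fintype.card ι)
include hV

lemma prob_restrict_of_uniform (S : Finset ι) (v : S → Bool) :
    prob p (fun ω (i : S) => V i ω) v = (1 / 2 : ℝ) ^ #S := by
  refine (prob_comp p (fun ω i => V i ω) (fun w (i : S) => w i) v).trans ?_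
  rw [sum_congr rfl fun w _ => hV w, sum_const, nsmul_eq_mul, ← Fintype.card_subtype,
    card_restrict_fiber]
  have hS : #S ≤ Fintype.card ι := card_le_univ S
  rw [← Nat.sub_add_cancel hS, pow_add, Nat.add_sub_cancel]
  push_cast
  rw [← mul_assoc, ← mul_pow]
  norm_num

lemma entropy_restrict_of_uniform (S : Finset ι) :
    entropy p (fun ω (i : S) => V i ω) = #S := by
  have hcard : Fintype.card (S → Bool) = 2 ^ #S := by
    rw [Fintype.card_fun, Fintype.card_bool, Fintype.card_coe]
  rw [entropy_eq_logb_card_of_uniform p _ fun v => by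
    rw [prob_restrict_of_uniform p hV, hcard]; push_cast; rw [one_div, inv_pow]]
  rw [hcard]
  push_cast
  rw [logb_pow, logb_self_eq_one one_lt_two, mul_one]

lemma entropy_apply_of_uniform (i : ι) : entropy p (V i) = 1 := by
  have hinj :
      Function.Injective fun t : ({i} : Finset ι) → Bool => t ⟨i, mem_singleton_self i⟩ :=
    fun t t' h => funext fun ⟨j, hj⟩ => by
      obtain rfl := mem_singleton.1 hj
      exact h
  have h := entropy_comp_of_injective p (fun ω (j : ({i} : Finset ι)) => V j ω) hinj
  rw [entropy_restrict_of_uniform p hV, card_singleton, Nat.cast_one] at h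
  exact h

lemma condEntropy_apply_of_uniform {γ : Type} [Fintype γ] (i : ι) (W : Ω → γ) :
    condEntropy p (V i) W = 1 - mutInfo p (V i) W := by
  rw [mutInfo_eq_entropy_sub_condEntropy, entropy_apply_of_uniform p hV]
  ring

lemma condEntropy_restrict_of_uniform {S T : Finset ι} (hST : Disjoint S T) :
    condEntropy p (fun ω (i : S) => V i ω) (fun ω (i : T) => V i ω) = #S := by
  have hinj : Function.Injective fun t : ↥(S ∪ T) → Bool =>
      ((fun i : S => t ⟨i, mem_union_left T i.2⟩),
        (fun i : T => t ⟨i, mem_union_right S i.2⟩)) := by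
    intro t t' h
    simp only [Prod.mk.injEq, funext_iff] at h
    funext ⟨i, hi⟩
    rcases mem_union.1 hi with hi | hi
    · exact h.1 ⟨i, hi⟩
    · exact h.2 ⟨i, hi⟩
  have h := entropy_comp_of_injective p (fun ω (i : ↥(S ∪ T)) => V i ω) hinj
  beta_reduce at h
  rw [condEntropy, h, entropy_restrict_of_uniform p hV, entropy_restrict_of_uniform p hV,
    card_union_of_disjoint hST]
  push_cast
  ring

end UniformBits

lemma exists_prefix_eq_of_union_eq_univ {Ω ζ : Type} {n : ℕ} (V : Fin n → Ω → Bool)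
    (Z : Ω → ζ) {D B : Finset (Fin n)} (hDB : D ∪ B = univ) (i : Fin n) :
    ∃ u : (D.filter (· < i) → Bool) × (ζ × (B → Bool)) → ζ × (Fin i → Bool),
      ∀ ω, u (fun j => V j ω, (Z ω, fun j => V j ω))
        = (Z ω, fun j => V (Fin.castLE i.isLt.le j) ω) := by
  have hmem : ∀ j : Fin i, Fin.castLE i.isLt.le j ∉ B →
      Fin.castLE i.isLt.le j ∈ D.filter (· < i) := fun j hj => by
    have hjDB : Fin.castLE i.isLt.le j ∈ D ∪ B := hDB ▸ mem_univ _
    exact mem_filter.2 ⟨(mem_union.1 hjDB).resolve_right hj, Fin.lt_def.2 j.isLt⟩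
  refine ⟨fun t => (t.2.1, fun j => if h : Fin.castLE i.isLt.le j ∈ B
    then t.2.2 ⟨_, h⟩ else t.1 ⟨_, hmem j h⟩), fun ω => ?_⟩
  simp only [Prod.mk.injEq, true_and]
  funext j
  split_ifs <;> rfl

theorem stmt3_general {Ω : Type} [Fintype Ω] (p : Ω → ℝ) (hp : IsPMF p)
    {n : ℕ} (V : Fin n → Ω → Bool) {ζ : Type} [Fintype ζ] (Z : Ω → ζ)
    (hV : ∀ v : Fin n → Bool, prob p (fun ω i => V i ω) v = (1 / 2 : ℝ) ^ n)
    (A R B : Finset (Fin n))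
    (hAR : Disjoint A R) (hAB : Disjoint A B)
    (hcover : A ∪ R ∪ B = Finset.univ) :
    condMutInfo p (fun ω (i : {i // i ∈ A}) => V i.1 ω) Z
        (fun ω (i : {i // i ∈ B}) => V i.1 ω)
      ≥ max ((∑ i ∈ A, mutInfo p (V i)
              (fun ω => (Z ω, fun j : Fin i.val => V (Fin.castLE i.isLt.le j) ω)))
          + (∑ i ∈ R, mutInfo p (V i)
              (fun ω => (Z ω, fun j : Fin i.val => V (Fin.castLE i.isLt.le j) ω)))
          - (R.card : ℝ)) 0 := by
  have hV' : ∀ v : Fin n → Bool,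
      prob p (fun ω i => V i ω) v = (1 / 2 : ℝ) ^ Fintype.card (Fin n) := by
    simpa only [Fintype.card_fin] using hV
  have hchain := condEntropy_pi_le_sum p hp V (fun ω => (Z ω, fun i : B => V i ω))
    (fun i ω => (Z ω, fun j : Fin i.val => V (Fin.castLE i.isLt.le j) ω)) (A ∪ R)
    fun i _ => exists_prefix_eq_of_union_eq_univ V Z hcover i
  simp only [condEntropy_apply_of_uniform p hV', sum_sub_distrib, sum_const, nsmul_eq_mul,
    mul_one, sum_union hAR] at hchain
  have hmono := condEntropy_comp_left_le p hp (fun ω (i : ↥(A ∪ R)) => V i ω)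
    (fun t (i : A) => t ⟨i, mem_union_left R i.2⟩) (fun ω => (Z ω, fun i : B => V i ω))
  dsimp only at hmono
  refine max_le ?_ (condMutInfo_nonneg p hp _ _ _)
  rw [condMutInfo_eq_condEntropy_sub, condEntropy_restrict_of_uniform p hV' hAB]
  linarith

/-- **Proposition 3** (channel-independent form). In the secrecy-code setup —
`V 1, …, V n` i.i.d. uniform bits, `Z` arbitrary, `{1,…,n} = A ∪ R ∪ B` a partition —
`I(V_A ; Z ∣ V_B) ≥ max (∑_{i∈A} C_i + ∑_{j∈R} C_j − r) 0`,
where `C_i = I(V i ; (Z, V_{<i}))` and `r = |R|`. -/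
theorem stmt3 {Ω : Type} [Fintype Ω] (p : Ω → ℝ) (hp : IsPMF p)
    {n : ℕ} (V : Fin n → Ω → Bool) {ζ : Type} [Fintype ζ] (Z : Ω → ζ)
    (hV : ∀ v : Fin n → Bool, prob p (fun ω i => V i ω) v = (1 / 2 : ℝ) ^ n)
    (A R B : Finset (Fin n))
    (hAR : Disjoint A R) (hAB : Disjoint A B) (hRB : Disjoint R B)
    (hcover : A ∪ R ∪ B = Finset.univ) :
    condMutInfo p (fun ω (i : {i // i ∈ A}) => V i.1 ω) Z
        (fun ω (i : {i // i ∈ B}) => V i.1 ω)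
      ≥ max ((∑ i ∈ A, mutInfo p (V i)
              (fun ω => (Z ω, fun j : Fin i.val => V (Fin.castLE i.isLt.le j) ω)))
          + (∑ i ∈ R, mutInfo p (V i)
              (fun ω => (Z ω, fun j : Fin i.val => V (Fin.castLE i.isLt.le j) ω)))
          - (R.card : ℝ)) 0 :=
  stmt3_general p hp V Z hV A R B hAR hAB hcover
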